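/- arXiv:math/9905121 — 12 statements merged into one kernel-verified Lean document; each statement's English description precedes it below -/
import Mathlib

section
/- If X is a set of real numbers such that every Borel image of X into Baire space ℕ → ℕ has the property that for every sequence of open covers (U_n) there is a selection of one set from each cover whose union covers the image, then X satisfies the following selection property: for every sequence (U_n) of countable covers of X by Borel sets, one can select Y_n ∈ U_n for each n with X ⊆ ⋃_n Y_n. -/
open Set Filter

def A1Set (X : Set ℝ) : Prop :=
  ∀ U : ℕ → Set (Set ℝ),
    (∀ n, (U n).Countable) →
    (∀ n, ∀ B ∈ U n, MeasurableSet B) →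
    (∀ n, X ⊆ ⋃₀ U n) →
    ∃ Y : ℕ → Set ℝ, (∀ n, Y n ∈ U n) ∧ X ⊆ ⋃ n, Y n

def Rothberger (Z : Set (ℕ → ℕ)) : Prop :=
  ∀ G : ℕ → Set (Set (ℕ → ℕ)),
    (∀ n, ∀ g ∈ G n, IsOpen g) →
    (∀ n, Z ⊆ ⋃₀ G n) →
    ∃ S : ℕ → Set (ℕ → ℕ), (∀ n, S n ∈ G n) ∧ Z ⊆ ⋃ n, S n

theorem stmt0 (X : Set ℝ)
    (h : ∀ Ψ : X → (ℕ → ℕ), Measurable Ψ → Rothberger (Set.range Ψ)) :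
    A1Set X := by
  classical
  intro U hcount hmeasU hcov
  rcases X.eq_empty_or_nonempty with hX | ⟨x0, hx0⟩
  · -- X empty: derive a contradiction from h
    have hE : IsEmpty X := by rw [hX]; exact Set.isEmpty_coe_sort.mpr rfl
    have hroth := h (fun _ _ => 0) measurable_const
    obtain ⟨S, hS, _⟩ := hroth (fun _ => ∅) (by simp) (by
      intro n z hz
      obtain ⟨x, -⟩ := hz
      exact (hE.false x).elim)
    exact absurd (hS 0) (notMem_empty _)
  · -- enumerate each U n
    have hUne : ∀ n, (U n).Nonempty := fun n => by
      obtain ⟨t, ht, -⟩ := hcov n hx0; exact ⟨t, ht⟩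
    choose B hB using fun n => (hcount n).exists_eq_range (hUne n)
    have hex : ∀ (n : ℕ) (x : X), ∃ k, (x : ℝ) ∈ B n k := by
      intro n x
      have := hcov n x.2
      rw [hB n, sUnion_range] at this
      exact mem_iUnion.mp this
    set Ψ : X → (ℕ → ℕ) := fun x n => Nat.find (hex n x) with hΨ
    have hBmeas : ∀ n k, MeasurableSet (B n k) := fun n k =>
      hmeasU n (B n k) (by rw [hB n]; exact mem_range_self k)
    have hmeas : Measurable Ψ := by
      rw [measurable_pi_iff]
      intro n
      apply measurable_to_countable'
      intro k
      have : (fun x : X => Ψ x n) ⁻¹' {k}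
          = Subtype.val ⁻¹' (B n k ∩ ⋂ j < k, (B n j)ᶜ) := by
        ext x
        simp only [hΨ, mem_preimage, mem_singleton_iff, Nat.find_eq_iff,
          mem_inter_iff, mem_iInter, mem_compl_iff]
      rw [this]
      exact measurable_subtype_coe
        ((hBmeas n k).inter (MeasurableSet.iInter fun j =>
          MeasurableSet.iInter fun _ => (hBmeas n j).compl))
    obtain ⟨S, hS, hScov⟩ := h Ψ hmeas
      (fun n => range (fun k => {f : ℕ → ℕ | f n = k}))
      (by
        rintro n g ⟨k, rfl⟩
        show IsOpen ((fun f : ℕ → ℕ => f n) ⁻¹' {k})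
        exact (isOpen_discrete ({k} : Set ℕ)).preimage (continuous_apply n))
      (by
        rintro n _ ⟨x, rfl⟩
        exact ⟨{f | f n = Ψ x n}, mem_range_self _, rfl⟩)
    choose k hk using hS
    refine ⟨fun n => B n (k n), fun n => by rw [hB n]; exact mem_range_self _, ?_⟩
    intro x hx
    obtain ⟨_, ⟨n, rfl⟩, hn⟩ := hScov (mem_range_self ⟨x, hx⟩)
    have hn2 : Ψ ⟨x, hx⟩ ∈ {f : ℕ → ℕ | f n = k n} := by 
      have hkn : {f : ℕ → ℕ | f n = k n} = S n := hk n
      rw [hkn]; exact hn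
    have hspec : x ∈ B n (Ψ ⟨x, hx⟩ n) := Nat.find_spec (hex n ⟨x, hx⟩)
    rw [hn2] at hspec
    exact mem_iUnion.mpr ⟨n, hspec⟩
end

section
/- If X is a set of real numbers that is an A₁-set (for every sequence of countable Borel covers of X one can select one member from each whose union covers X), then every Borel image of X in Baire space ℕ → ℕ has Rothberger's property C''. -/
open Set Filter

theorem stmt1 (X : Set ℝ) (h : A1Set X) :
    ∀ Ψ : X → (ℕ → ℕ), Measurable Ψ → Rothberger (Set.range Ψ) := by
  intro Ψ hΨ G hGopen hGcov
  rcases X.eq_empty_or_nonempty with hX | hX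
  · exfalso
    obtain ⟨Y, hY, -⟩ := h (fun _ => ∅) (by simp) (by simp) (by simp [hX])
    exact (hY 0).elim
  have : Nonempty X := hX.to_subtype
  have hrne : (Set.range Ψ).Nonempty := Set.range_nonempty Ψ
  -- countable subcovers
  have key : ∀ n, ∃ g : ℕ → Set (ℕ → ℕ),
      (∀ k, g k ∈ G n) ∧ Set.range Ψ ⊆ ⋃ k, g k := by
    intro n
    obtain ⟨T, hTct, hT⟩ := TopologicalSpace.isOpen_iUnion_countable
      (fun i : G n => (i : Set (ℕ → ℕ))) (fun i => hGopen n i i.2)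
    have hcov : Set.range Ψ ⊆ ⋃ i ∈ T, (i : Set (ℕ → ℕ)) := by
      rw [hT]
      intro z hz
      obtain ⟨g, hg, hzg⟩ := hGcov n hz
      exact mem_iUnion.2 ⟨⟨g, hg⟩, hzg⟩
    have hTne : T.Nonempty := by
      obtain ⟨z, hz⟩ := hrne
      obtain ⟨i, hi⟩ := mem_iUnion.1 (hcov hz)
      simp only [mem_iUnion] at hi
      exact ⟨i, hi.1⟩
    obtain ⟨f, hf⟩ := hTct.exists_eq_range hTne
    refine ⟨fun k => (f k : Set (ℕ → ℕ)), fun k => (f k).2, ?_⟩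
    intro z hz
    obtain ⟨i, hi⟩ := mem_iUnion.1 (hcov hz)
    simp only [mem_iUnion] at hi
    obtain ⟨hiT, hzi⟩ := hi
    rw [hf] at hiT
    obtain ⟨k, hk⟩ := hiT
    exact mem_iUnion.2 ⟨k, by rw [hk]; exact hzi⟩
  choose g hgmem hgcov using key
  -- Borel pullbacks
  have key2 : ∀ n k, ∃ B : Set ℝ, MeasurableSet B ∧
      (Subtype.val ⁻¹' B : Set X) = Ψ ⁻¹' (g n k) := by
    intro n k
    have : MeasurableSet (Ψ ⁻¹' (g n k)) :=
      hΨ (hGopen n _ (hgmem n k)).measurableSet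
    exact MeasurableSpace.measurableSet_comap.1 this
  choose B hBmeas hBpre using key2
  obtain ⟨Y, hYmem, hYcov⟩ := h (fun n => Set.range (B n))
    (fun n => countable_range _)
    (fun n Bset hBset => by obtain ⟨k, rfl⟩ := hBset; exact hBmeas n k)
    (by
      intro n x hx
      have : Ψ ⟨x, hx⟩ ∈ ⋃ k, g n k := hgcov n ⟨⟨x, hx⟩, rfl⟩
      obtain ⟨k, hk⟩ := mem_iUnion.1 this
      have : (⟨x, hx⟩ : X) ∈ (Subtype.val ⁻¹' B n k : Set X) := by
        rw [hBpre]; exact hk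
      exact ⟨B n k, ⟨k, rfl⟩, this⟩)
  choose k hk using hYmem
  refine ⟨fun n => g n (k n), fun n => hgmem n (k n), ?_⟩
  rintro z ⟨⟨x, hx⟩, rfl⟩
  obtain ⟨n, hn⟩ := mem_iUnion.1 (hYcov hx)
  refine mem_iUnion.2 ⟨n, ?_⟩
  have hxB : x ∈ B n (k n) := by rw [hk n]; exact hn
  have : (⟨x, hx⟩ : X) ∈ Ψ ⁻¹' (g n (k n)) := by
    rw [← hBpre]; exact hxB
  exact this
end

section
/- The collection of A₁-sets is closed under countable unions: if X_n ⊆ ℝ is an A₁-set for each n ∈ ℕ, then ⋃_n X_n is an A₁-set. -/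
open Set Filter

theorem stmt2 (X : ℕ → Set ℝ) (h : ∀ n, A1Set (X n)) :
    A1Set (⋃ n, X n) := by
  intro U hc hm hcov
  -- For each k, apply A1Set (X k) to the subfamily m ↦ U (Nat.pair k m)
  have key : ∀ k, ∃ Z : ℕ → Set ℝ, (∀ m, Z m ∈ U (Nat.pair k m)) ∧ X k ⊆ ⋃ m, Z m := by
    intro k
    exact h k (fun m => U (Nat.pair k m)) (fun m => hc _) (fun m => hm _)
      (fun m x hx => hcov _ (mem_iUnion.2 ⟨k, hx⟩))
  choose Z hZmem hZcov using key
  refine ⟨fun n => Z (Nat.unpair n).1 (Nat.unpair n).2, fun n => ?_, ?_⟩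
  · have := hZmem (Nat.unpair n).1 (Nat.unpair n).2
    rwa [Nat.pair_unpair] at this
  · intro x hx
    obtain ⟨k, hk⟩ := mem_iUnion.1 hx
    obtain ⟨m, hm'⟩ := mem_iUnion.1 (hZcov k hk)
    refine mem_iUnion.2 ⟨Nat.pair k m, ?_⟩
    simpa [Nat.unpair_pair] using hm'
end

section
/- If X ⊆ ℝ is an A₂-set, then every Borel image of X into Baire space ℕ → ℕ is bounded, i.e., for every Borel function Ψ : X → (ℕ → ℕ) there exists g : ℕ → ℕ such that for every x ∈ X, Ψ(x)(n) ≤ g(n) for all but finitely many n. -/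
open Set Filter

def A2Set (X : Set ℝ) : Prop :=
  ∀ U : ℕ → Set (Set ℝ),
    (∀ n, (U n).Countable) →
    (∀ n, ∀ B ∈ U n, MeasurableSet B) →
    (∀ n, X ⊆ ⋃₀ U n) →
    ∃ F : ℕ → Set (Set ℝ), (∀ n, (F n).Finite) ∧ (∀ n, F n ⊆ U n) ∧
      X ⊆ ⋃ n, ⋂ m, ⋂ (_ : n ≤ m), ⋃₀ F m

def BddBaire (Z : Set (ℕ → ℕ)) : Prop :=
  ∃ g : ℕ → ℕ, ∀ f ∈ Z, ∀ᶠ n in atTop, f n ≤ g n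

theorem stmt4 (X : Set ℝ) (h : A2Set X) :
    ∀ Ψ : X → (ℕ → ℕ), Measurable Ψ → BddBaire (Set.range Ψ) := by
  intro Ψ hΨ
  -- S n k : measurable subset of the subtype X
  have hS : ∀ n k : ℕ, MeasurableSet ((fun x => Ψ x n) ⁻¹' Set.Iic k) := by
    intro n k
    exact ((measurable_pi_apply n).comp hΨ) ((Set.finite_Iic k).measurableSet)
  -- choose Borel B n k ⊆ ℝ with val ⁻¹' (B n k) = S n k
  have hB : ∀ n k : ℕ, ∃ B : Set ℝ, MeasurableSet B ∧
      (Subtype.val ⁻¹' B : Set X) = (fun x => Ψ x n) ⁻¹' Set.Iic k := by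
    intro n k
    exact (MeasurableSpace.measurableSet_comap).mp (hS n k)
  choose B hBmeas hBpre using hB
  set U : ℕ → Set (Set ℝ) := fun n => Set.range (B n) with hU
  have hcount : ∀ n, (U n).Countable := fun n => Set.countable_range _
  have hmeas : ∀ n, ∀ C ∈ U n, MeasurableSet C := by
    rintro n C ⟨k, rfl⟩; exact hBmeas n k
  have hcov : ∀ n, X ⊆ ⋃₀ U n := by
    intro n x hx
    refine ⟨B n (Ψ ⟨x, hx⟩ n), ⟨Ψ ⟨x, hx⟩ n, rfl⟩, ?_⟩
    have : (⟨x, hx⟩ : X) ∈ (Subtype.val ⁻¹' B n (Ψ ⟨x, hx⟩ n) : Set X) := by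
      rw [hBpre]; exact Set.mem_preimage.mpr (Set.mem_Iic.mpr le_rfl)
    exact this
  obtain ⟨F, hFfin, hFsub, hFcov⟩ := h U hcount hmeas hcov
  -- for each m, bound the indices appearing in F m
  have hbound : ∀ m, ∃ N : ℕ, ∀ C ∈ F m, ∃ k ≤ N, C = B m k := by
    intro m
    have hsub : F m ⊆ Set.range (B m) := hFsub m
    haveI : Finite (F m) := (hFfin m).to_subtype
    have : ∀ C : F m, ∃ k : ℕ, B m k = (C : Set ℝ) := fun C => hsub C.2
    choose idx hidx using this
    obtain ⟨N, hN⟩ := (Set.finite_range idx).bddAbove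
    refine ⟨N, fun C hC => ⟨idx ⟨C, hC⟩, hN ⟨⟨C, hC⟩, rfl⟩, (hidx ⟨C, hC⟩).symm⟩⟩
  choose g hg using hbound
  refine ⟨g, ?_⟩
  rintro f ⟨x, rfl⟩
  obtain ⟨_, ⟨n, rfl⟩, hx⟩ := hFcov x.2
  simp only [Set.mem_iInter] at hx
  refine Filter.eventually_atTop.mpr ⟨n, fun m hm => ?_⟩
  obtain ⟨C, hCF, hxC⟩ := hx m hm
  obtain ⟨k, hkN, rfl⟩ := hg m C hCF
  have hxS : x ∈ (Subtype.val ⁻¹' B m k : Set X) := hxC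
  rw [hBpre] at hxS
  exact le_trans hxS hkN
end

section
/- If X ⊆ ℝ has the property that every Borel image of X into Baire space is eventually bounded by a single function, then X is an A₂-set: for every sequence of countable Borel covers (U_n) of X there exist finite subfamilies G_n ⊆ U_n with X ⊆ ⋃_n ⋂_{m ≥ n} ⋃ G_m. -/
open Set Filter

theorem stmt5 (X : Set ℝ)
    (h : ∀ Ψ : X → (ℕ → ℕ), Measurable Ψ → BddBaire (Set.range Ψ)) :
    A2Set X := by
  classical
  intro U hcnt hmeas hcov
  rcases X.eq_empty_or_nonempty with hX | hX
  · exact ⟨fun _ => ∅, fun _ => Set.finite_empty, fun _ => Set.empty_subset _, by simp [hX]⟩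
  obtain ⟨x0, hx0⟩ := hX
  have hUn : ∀ n, (U n).Nonempty := fun n => by
    obtain ⟨B, hB, -⟩ := hcov n hx0; exact ⟨B, hB⟩
  choose e he using fun n => (hcnt n).exists_eq_range (hUn n)
  have hmem : ∀ (x : X) (n : ℕ), ∃ k, (x : ℝ) ∈ e n k := by
    intro x n
    obtain ⟨B, hB, hxB⟩ := hcov n x.2
    rw [he n] at hB; obtain ⟨k, rfl⟩ := hB; exact ⟨k, hxB⟩
  have hemem : ∀ n k, e n k ∈ U n := fun n k => (he n) ▸ ⟨k, rfl⟩
  set Ψ : X → ℕ → ℕ := fun x n => Nat.find (hmem x n) with hΨ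
  have hmeasΨ : Measurable Ψ := by
    rw [measurable_pi_iff]
    intro n
    apply measurable_to_countable'
    intro k
    have hset : (fun x : X => Ψ x n) ⁻¹' {k} =
        ((fun x : X => (x : ℝ)) ⁻¹' (e n k)) ∩
          ⋂ j ∈ Finset.range k, ((fun x : X => (x : ℝ)) ⁻¹' (e n j))ᶜ := by
      ext x
      simp only [Set.mem_preimage, Set.mem_singleton_iff, Set.mem_inter_iff,
        Set.mem_iInter, Set.mem_compl_iff, Finset.mem_range, hΨ, Nat.find_eq_iff]
    rw [hset]
    exact ((hmeas n _ (hemem n k)).preimage measurable_subtype_coe).inter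
      (MeasurableSet.biInter (Set.to_countable _) fun j _ =>
        ((hmeas n _ (hemem n j)).preimage measurable_subtype_coe).compl)
  obtain ⟨g, hg⟩ := h Ψ hmeasΨ
  refine ⟨fun n => e n '' {k | k ≤ g n}, ?_, ?_, ?_⟩
  · intro n
    exact (Set.finite_Iic (g n)).image _
  · intro n B hB
    obtain ⟨k, -, rfl⟩ := hB
    exact hemem n k
  · intro x hx
    obtain ⟨N, hN⟩ := Filter.eventually_atTop.mp (hg (Ψ ⟨x, hx⟩) ⟨⟨x, hx⟩, rfl⟩)
    refine Set.mem_iUnion.mpr ⟨N, ?_⟩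
    simp only [Set.mem_iInter]
    intro m hm
    exact ⟨e m (Ψ ⟨x, hx⟩ m), ⟨Ψ ⟨x, hx⟩ m, hN m hm, rfl⟩, Nat.find_spec (hmem ⟨x, hx⟩ m)⟩
end

section
/- For a subset Z of Baire space ℕ → ℕ, if every continuous image of Z into Baire space is bounded, then Z has the Hurewicz property H: for every sequence (G_n) of open covers of Z there exist finite subfamilies F_n ⊆ G_n with Z ⊆ ⋃_n ⋂_{m ≥ n} ⋃ F_m. -/
open Set Filter

def HurewiczH (Z : Set (ℕ → ℕ)) : Prop :=
  ∀ G : ℕ → Set (Set (ℕ → ℕ)),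
    (∀ n, ∀ g ∈ G n, IsOpen g) →
    (∀ n, Z ⊆ ⋃₀ G n) →
    ∃ F : ℕ → Set (Set (ℕ → ℕ)), (∀ n, (F n).Finite) ∧ (∀ n, F n ⊆ G n) ∧
      Z ⊆ ⋃ n, ⋂ m, ⋂ (_ : n ≤ m), ⋃₀ F m

theorem stmt6 (Z : Set (ℕ → ℕ))
    (h : ∀ f : Z → (ℕ → ℕ), Continuous f → BddBaire (Set.range f)) :
    HurewiczH Z := by
  classical
  intro G hGopen hGcover
  rcases Z.eq_empty_or_nonempty with hZ | ⟨z0, hz0⟩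
  · exact ⟨fun _ => ∅, fun _ => finite_empty, fun _ => empty_subset _, by
      simp [hZ]⟩
  -- countable subcovers
  have hLin : IsLindelof Z := HereditarilyLindelof_LindelofSets Z
  have hsub : ∀ n, ∃ s : ℕ → Set (ℕ → ℕ), (∀ j, s j ∈ G n) ∧ Z ⊆ ⋃ j, s j := by
    intro n
    obtain ⟨b', hb'G, hb'c, hb'cov⟩ := hLin.elim_countable_subcover_image
      (c := id) (b := G n) (fun g hg => hGopen n g hg)
      (by simpa [Set.sUnion_eq_biUnion] using hGcover n)
    have hne : b'.Nonempty := by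
      rcases hb'cov hz0 with ⟨-, ⟨g, rfl⟩, hg⟩
      simp only [Set.mem_iUnion] at hg
      exact ⟨g, hg.1⟩
    obtain ⟨s, hs⟩ := hb'c.exists_eq_range hne
    refine ⟨s, fun j => hb'G (by rw [hs]; exact mem_range_self j), ?_⟩
    intro z hz
    rcases hb'cov hz with ⟨-, ⟨g, rfl⟩, hg⟩
    simp only [Set.mem_iUnion, id] at hg
    obtain ⟨hg1, hg2⟩ := hg
    rw [hs] at hg1
    obtain ⟨j, rfl⟩ := hg1
    exact mem_iUnion.2 ⟨j, hg2⟩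
  choose s hsG hscov using hsub
  -- the increasing unions
  set U : ℕ → ℕ → Set (ℕ → ℕ) := fun n k => ⋃ j ∈ Set.Iic k, s n j with hU
  have hUopen : ∀ n k, IsOpen (U n k) :=
    fun n k => isOpen_biUnion fun j _ => hGopen n _ (hsG n j)
  have hUmono : ∀ n {k k'}, k ≤ k' → U n k ⊆ U n k' := by
    intro n k k' hk
    exact Set.biUnion_subset_biUnion_left (Set.Iic_subset_Iic.2 hk)
  -- existence of k with cylinder z k ⊆ U n k
  have hex : ∀ z ∈ Z, ∀ n : ℕ, ∃ k, PiNat.cylinder z k ⊆ U n k := by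
    intro z hz n
    rcases mem_iUnion.1 (hscov n hz) with ⟨j, hj⟩
    obtain ⟨v, ⟨y, m, rfl⟩, hzy, hvs⟩ :=
      (PiNat.isTopologicalBasis_cylinders (fun _ : ℕ => ℕ)).exists_subset_of_mem_open hj
        (hGopen n _ (hsG n j))
    rw [← PiNat.mem_cylinder_iff_eq.1 hzy] at hvs
    refine ⟨max j m, fun w hw => ?_⟩
    have : w ∈ s n j := hvs (PiNat.cylinder_anti z (le_max_right j m) hw)
    exact Set.mem_biUnion (le_max_left j m) this
  -- the continuous function
  set f : Z → (ℕ → ℕ) := fun z n => Nat.find (hex z.1 z.2 n) with hf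
  have hfcont : Continuous f := by
    refine continuous_pi fun n => IsLocallyConstant.continuous ?_
    rw [IsLocallyConstant.iff_exists_open]
    intro z
    set k0 := f z n with hk0
    refine ⟨{w : Z | (w : ℕ → ℕ) ∈ PiNat.cylinder z.1 k0},
      (PiNat.isOpen_cylinder (fun _ : ℕ => ℕ) z.1 k0).preimage continuous_subtype_val,
      PiNat.self_mem_cylinder _ _, ?_⟩
    intro w hw
    have hcyl : ∀ j ≤ k0, PiNat.cylinder w.1 j = PiNat.cylinder z.1 j := by
      intro j hj
      exact PiNat.mem_cylinder_iff_eq.1 (PiNat.cylinder_anti z.1 hj hw)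
    have hfz := Nat.find_spec (hex z.1 z.2 n)
    rw [show f w n = Nat.find (hex w.1 w.2 n) from rfl, Nat.find_eq_iff]
    constructor
    · rw [hcyl k0 le_rfl]; exact hfz
    · intro j hj hcon
      rw [hcyl j hj.le] at hcon
      exact Nat.find_min (hex z.1 z.2 n) hj hcon
  obtain ⟨b, hb⟩ := h f hfcont
  refine ⟨fun n => s n '' Set.Iic (b n), fun n => (Set.finite_Iic (b n)).image _,
    fun n => ?_, ?_⟩
  · rintro - ⟨j, -, rfl⟩; exact hsG n j
  · intro z hz
    have hbz := hb (f ⟨z, hz⟩) (mem_range_self _)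
    rw [eventually_atTop] at hbz
    obtain ⟨N, hN⟩ := hbz
    refine mem_iUnion.2 ⟨N, ?_⟩
    simp only [Set.mem_iInter]
    intro m hm
    have h1 : z ∈ U m (f ⟨z, hz⟩ m) :=
      Nat.find_spec (hex z hz m) (PiNat.self_mem_cylinder _ _)
    have h2 : z ∈ U m (b m) := hUmono m (hN m hm) h1
    rw [Set.sUnion_image]
    exact h2
end

section
/- For a subset Z of Baire space with the Hurewicz property H, Z is a bounded subset of Baire space: there exists g : ℕ → ℕ such that every f ∈ Z satisfies f(n) ≤ g(n) for all but finitely many n. -/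
/-! Apply H to the covers `{{f | f n ≤ k} | k ∈ ℕ}`: a finite subfamily of the `n`-th cover lies
in `{f | f n ≤ g n}`, where `g n` is its largest index, and H then puts every `f ∈ Z` in these
sets for all large `n`. -/

open Set Filter

theorem Set.Finite.exists_sUnion_subset_of_subset_range {α ι : Type*} [Preorder ι]
    [IsDirected ι (· ≤ ·)] [Nonempty ι] {s : ι → Set α} (hs : Monotone s)
    {F : Set (Set α)} (hF : F.Finite) (hFs : F ⊆ range s) : ∃ i, ⋃₀ F ⊆ s i := by
  choose! k hk using fun u (hu : u ∈ F) => hFs hu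
  obtain ⟨i, hi⟩ := (hF.image k).bddAbove
  refine ⟨i, sUnion_subset fun u hu => ?_⟩
  rw [← hk u hu]
  exact hs (hi (mem_image_of_mem k hu))

theorem stmt7 (Z : Set (ℕ → ℕ)) (h : HurewiczH Z) : BddBaire Z := by
  obtain ⟨F, hF_finite, hF_sub, hZ⟩ := h (fun n => range fun k => {f | f n ≤ k})
    (by
      rintro n _ ⟨k, rfl⟩
      exact (isOpen_discrete {m : ℕ | m ≤ k}).preimage (continuous_apply (A := fun _ : ℕ => ℕ) n))
    (fun n f _ => mem_sUnion.2 ⟨_, mem_range_self (f n), le_refl (f n)⟩)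
  choose g hg using fun n => (hF_finite n).exists_sUnion_subset_of_subset_range
    (s := fun k => {f : ℕ → ℕ | f n ≤ k}) (fun _ _ hkl _ hf => le_trans hf hkl) (hF_sub n)
  refine ⟨g, fun f hf => ?_⟩
  obtain ⟨n, hn⟩ := mem_iUnion.1 (hZ hf)
  exact eventually_atTop.2 ⟨n, fun m hm => hg m (mem_iInter₂.1 hn m hm)⟩
end

section
/- If every Borel image of X ⊆ ℝ into Baire space is bounded, then every Borel image of X into Baire space has the Hurewicz property H. -/
open Set Filter

theorem stmt8 (X : Set ℝ)
    (h : ∀ Ψ : X → (ℕ → ℕ), Measurable Ψ → BddBaire (Set.range Ψ)) :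
    ∀ Ψ : X → (ℕ → ℕ), Measurable Ψ → HurewiczH (Set.range Ψ) := by
  classical
  intro Ψ hΨ G hGopen hGcov
  by_cases hZ : (Set.range Ψ).Nonempty
  case neg =>
    refine ⟨fun _ => ∅, fun _ => finite_empty, fun _ => empty_subset _, ?_⟩
    rw [Set.not_nonempty_iff_eq_empty] at hZ
    simp [hZ]
  obtain ⟨z, x0, hx0⟩ := hZ
  have hT : ∀ n, ∃ T, T.Countable ∧ T ⊆ G n ∧ ⋃₀ T = ⋃₀ G n :=
    fun n => TopologicalSpace.isOpen_sUnion_countable (G n) (hGopen n)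
  choose T hTc hTsub hTun using hT
  have hTne : ∀ n, (T n).Nonempty := by
    intro n
    have : z ∈ ⋃₀ T n := by
      rw [hTun]; exact hGcov n ⟨x0, hx0⟩
    obtain ⟨t, ht, -⟩ := this
    exact ⟨t, ht⟩
  choose e he using fun n => Set.Countable.exists_eq_range (hTc n) (hTne n)
  have hek : ∀ n k, e n k ∈ G n := fun n k =>
    hTsub n (by rw [he n]; exact mem_range_self k)
  have hexists : ∀ (x : X) (n : ℕ), ∃ k, Ψ x ∈ e n k := by
    intro x n
    have : Ψ x ∈ ⋃₀ T n := by rw [hTun]; exact hGcov n (mem_range_self x)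
    rw [he n] at this
    obtain ⟨t, ⟨k, rfl⟩, htx⟩ := this
    exact ⟨k, htx⟩
  have hΦmeas : Measurable (fun x n => Nat.find (hexists x n)) := by
    rw [measurable_pi_iff]
    intro n
    apply measurable_to_countable'
    intro k
    have hs : (fun x => Nat.find (hexists x n)) ⁻¹' {k} =
        (Ψ ⁻¹' (e n k)) ∩ ⋂ j ∈ Finset.range k, (Ψ ⁻¹' (e n j))ᶜ := by
      ext x
      simp only [mem_preimage, mem_singleton_iff, Nat.find_eq_iff, mem_inter_iff,
        mem_iInter, Finset.mem_range, mem_compl_iff, mem_preimage]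
    rw [hs]
    exact (hΨ ((hGopen n _ (hek n k)).measurableSet)).inter
      (MeasurableSet.biInter (to_countable _) fun j _ =>
        (hΨ ((hGopen n _ (hek n j)).measurableSet)).compl)
  obtain ⟨g, hg⟩ := h _ hΦmeas
  refine ⟨fun n => e n '' {k | k ≤ g n}, ?_, ?_, ?_⟩
  · intro n; exact (Set.finite_Iic (g n)).image _
  · rintro n s ⟨k, -, rfl⟩; exact hek n k
  · rintro y ⟨x, rfl⟩
    obtain ⟨N, hN⟩ := eventually_atTop.1 (hg _ (mem_range_self x))
    refine mem_iUnion.2 ⟨N, ?_⟩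
    simp only [mem_iInter]
    intro m hm
    exact ⟨e m (Nat.find (hexists x m)), ⟨Nat.find (hexists x m), hN m hm, rfl⟩,
      Nat.find_spec (hexists x m)⟩
end

section
/- If X ⊆ ℝ is an A₃-set, then every Borel image of X into Baire space has Menger's property M. -/
open Set Filter

def A3Set (X : Set ℝ) : Prop :=
  ∀ U : ℕ → Set (Set ℝ),
    (∀ n, (U n).Countable) →
    (∀ n, IsChain (· ⊆ ·) (U n)) →
    (∀ n, ∀ B ∈ U n, MeasurableSet B) →
    (∀ n, X ⊆ ⋃₀ U n) →
    ∃ Y : ℕ → Set ℝ, (∀ n, Y n ∈ U n) ∧ X ⊆ ⋃ n, Y n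

def MengerM {α : Type*} [TopologicalSpace α] (Z : Set α) : Prop :=
  ∀ G : ℕ → Set (Set α),
    (∀ n, ∀ g ∈ G n, IsOpen g) →
    (∀ n, IsChain (· ⊆ ·) (G n)) →
    (∀ n, Z ⊆ ⋃₀ G n) →
    ∃ F : ℕ → Set α, (∀ n, F n ∈ G n) ∧ Z ⊆ ⋃ n, F n

/-- Running maxima (unions) of a sequence of sets. -/
def seqMax {β : Type*} (e : ℕ → Set β) : ℕ → Set β
  | 0 => e 0
  | k + 1 => seqMax e k ∪ e (k + 1)

lemma seqMax_mem {β : Type*} {T : Set (Set β)} (hc : IsChain (· ⊆ ·) T)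
    {e : ℕ → Set β} (he : ∀ j, e j ∈ T) : ∀ k, seqMax e k ∈ T := by
  intro k
  induction k with
  | zero => exact he 0
  | succ k ih =>
    rcases hc.total ih (he (k + 1)) with hle | hle
    · show seqMax e k ∪ e (k + 1) ∈ T
      rw [Set.union_eq_right.mpr hle]; exact he (k + 1)
    · show seqMax e k ∪ e (k + 1) ∈ T
      rw [Set.union_eq_left.mpr hle]; exact ih

lemma seqMax_mono {β : Type*} (e : ℕ → Set β) : Monotone (seqMax e) :=
  monotone_nat_of_le_succ fun k => Set.subset_union_left

lemma le_seqMax {β : Type*} (e : ℕ → Set β) (k : ℕ) : e k ⊆ seqMax e k := by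
  cases k with
  | zero => exact subset_rfl
  | succ k => exact Set.subset_union_right

theorem stmt10 (X : Set ℝ) (h : A3Set X) :
    ∀ Ψ : X → (ℕ → ℕ), Measurable Ψ → MengerM (Set.range Ψ) := by
  intro Ψ hΨ G hGopen hGchain hGcov
  by_cases hne : ∀ n, (G n).Nonempty
  · choose g0 hg0 using hne
    have hsub : ∀ n, ∃ T, T.Countable ∧ T ⊆ G n ∧ ⋃₀ T = ⋃₀ G n := fun n =>
      TopologicalSpace.isOpen_sUnion_countable (G n) (hGopen n)
    choose T hTcnt hTsub hTun using hsub
    set T' : ℕ → Set (Set (ℕ → ℕ)) := fun n => insert (g0 n) (T n) with hT'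
    have hT'sub : ∀ n, T' n ⊆ G n := fun n =>
      Set.insert_subset (hg0 n) (hTsub n)
    have hT'chain : ∀ n, IsChain (· ⊆ ·) (T' n) := fun n => (hGchain n).mono (hT'sub n)
    have henum : ∀ n, ∃ e : ℕ → Set (ℕ → ℕ), T' n = Set.range e := fun n =>
      Set.Countable.exists_eq_range ((hTcnt n).insert _) ⟨g0 n, Set.mem_insert _ _⟩
    choose e he using henum
    have hemem : ∀ n k, e n k ∈ T' n := fun n k => (he n) ▸ Set.mem_range_self k
    set f : ℕ → ℕ → Set (ℕ → ℕ) := fun n => seqMax (e n) with hf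
    have hfmem : ∀ n k, f n k ∈ T' n := fun n => seqMax_mem (hT'chain n) (hemem n)
    have hfG : ∀ n k, f n k ∈ G n := fun n k => hT'sub n (hfmem n k)
    have hfmono : ∀ n, Monotone (f n) := fun n => seqMax_mono (e n)
    have hcov' : ∀ n, Set.range Ψ ⊆ ⋃ k, f n k := by
      intro n z hz
      have h1 : z ∈ ⋃₀ T n := (hTun n) ▸ hGcov n hz
      rcases h1 with ⟨t, ht, hzt⟩
      have h2 : t ∈ Set.range (e n) := (he n) ▸ Set.mem_insert_of_mem _ ht
      rcases h2 with ⟨k, rfl⟩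
      exact Set.mem_iUnion.mpr ⟨k, le_seqMax (e n) k hzt⟩
    -- get Borel sets in ℝ representing the preimages
    have hB : ∀ n k, ∃ B : Set ℝ, MeasurableSet B ∧ Subtype.val ⁻¹' B = Ψ ⁻¹' (f n k) := by
      intro n k
      have hm : MeasurableSet (Ψ ⁻¹' (f n k)) :=
        hΨ ((hGopen n _ (hfG n k)).measurableSet)
      exact MeasurableSpace.measurableSet_comap.mp hm
    choose B hBm hBpre using hB
    set C : ℕ → ℕ → Set ℝ := fun n k => ⋃ j ∈ Finset.range (k + 1), B n j with hC
    have hCmeas : ∀ n k, MeasurableSet (C n k) := fun n k =>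
      (Finset.range (k + 1)).measurableSet_biUnion (fun j _ => hBm n j)
    have hCmono : ∀ n, Monotone (C n) := by
      intro n
      apply monotone_nat_of_le_succ
      intro k x hx
      simp only [hC, Set.mem_iUnion, Finset.mem_range] at hx ⊢
      obtain ⟨j, hj, hx⟩ := hx
      exact ⟨j, by omega, hx⟩
    have hCpre : ∀ n k, Subtype.val ⁻¹' (C n k) = Ψ ⁻¹' (f n k) := by
      intro n k
      ext x
      simp only [hC, Set.preimage_iUnion, Set.mem_iUnion, Finset.mem_range]
      constructor
      · rintro ⟨j, hj, hx⟩
        rw [hBpre n j] at hx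
        exact hfmono n (by omega : j ≤ k) hx
      · intro hx
        exact ⟨k, by omega, (hBpre n k).symm ▸ hx⟩
    obtain ⟨Y, hYmem, hYcov⟩ := h (fun n => Set.range (C n))
      (fun n => Set.countable_range _)
      (by
        intro n A hA A' hA' _
        obtain ⟨a, rfl⟩ := hA
        obtain ⟨b, rfl⟩ := hA'
        rcases le_total a b with hab | hab
        · exact Or.inl (hCmono n hab)
        · exact Or.inr (hCmono n hab))
      (by rintro n A ⟨k, rfl⟩; exact hCmeas n k)
      (by
        intro n x hx
        have : Ψ ⟨x, hx⟩ ∈ ⋃ k, f n k := hcov' n (Set.mem_range_self _)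
        obtain ⟨k, hk⟩ := Set.mem_iUnion.mp this
        have : (⟨x, hx⟩ : X) ∈ Subtype.val ⁻¹' (C n k) := (hCpre n k).symm ▸ hk
        exact ⟨C n k, Set.mem_range_self k, this⟩)
    choose k hk using fun n => hYmem n
    refine ⟨fun n => f n (k n), fun n => hfG n (k n), ?_⟩
    rintro z ⟨⟨x, hx⟩, rfl⟩
    obtain ⟨n, hn⟩ := Set.mem_iUnion.mp (hYcov hx)
    rw [← hk n] at hn
    have : (⟨x, hx⟩ : X) ∈ Subtype.val ⁻¹' (C n (k n)) := hn
    rw [hCpre n (k n)] at this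
    exact Set.mem_iUnion.mpr ⟨n, this⟩
  · push_neg at hne
    obtain ⟨n, hn⟩ := hne
    have hX : X ⊆ ⋃₀ (∅ : Set (Set ℝ)) := by
      intro x hx
      have := hGcov n ⟨⟨x, hx⟩, rfl⟩
      rw [hn, Set.sUnion_empty] at this
      exact this.elim
    obtain ⟨Y, hY, -⟩ := h (fun _ => ∅) (fun _ => Set.countable_empty)
      (fun _ => IsChain.empty) (fun _ B hB => hB.elim) (fun _ => hX)
    exact (hY 0).elim
end

section
/- If every Borel image of X ⊆ ℝ into Baire space has Menger's property M, then X is an A₃-set: for every sequence of countable ascending chains of Borel sets, each covering X, one can select one set from each chain so that the selections cover X. -/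
open Set Filter

theorem stmt11 (X : Set ℝ)
    (h : ∀ Ψ : X → (ℕ → ℕ), Measurable Ψ → MengerM (Set.range Ψ)) :
    A3Set X := by
  classical
  intro U hcnt hchain hmeas hcov
  by_cases hne : ∀ n, (U n).Nonempty
  · -- enumerate each U n
    choose B hB using fun n => (hcnt n).exists_eq_range (hne n)
    have hex : ∀ x : X, ∀ n, ∃ k, (x : ℝ) ∈ B n k := by
      intro x n
      have := hcov n x.2
      rw [hB n] at this
      obtain ⟨t, ⟨k, rfl⟩, hxt⟩ := this
      exact ⟨k, hxt⟩
    set Ψ : X → ℕ → ℕ := fun x n => Nat.find (hex x n) with hΨdef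
    have hΨ : Measurable Ψ := by
      rw [measurable_pi_iff]
      intro n
      exact measurable_find (fun x => hex x n)
        (fun k => (hmeas n (B n k) (by rw [hB n]; exact mem_range_self k)).preimage
          measurable_subtype_coe)
    have hM := h Ψ hΨ
    set G : ℕ → Set (Set (ℕ → ℕ)) := fun n => {C | ∃ k, C = {f | f n ≤ k}} with hGdef
    obtain ⟨F, hF, hFcov⟩ := hM G
      (by
        rintro n g ⟨k, rfl⟩
        show IsOpen ((fun f : ℕ → ℕ => f n) ⁻¹' {m | m ≤ k})
        exact (isOpen_discrete _).preimage (continuous_apply n))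
      (by
        rintro n a ⟨i, rfl⟩ b ⟨j, rfl⟩ _
        rcases le_total i j with hij | hij
        · exact Or.inl fun f hf => le_trans hf hij
        · exact Or.inr fun f hf => le_trans hf hij)
      (by
        rintro n f ⟨x, rfl⟩
        exact ⟨{g | g n ≤ Ψ x n}, ⟨Ψ x n, rfl⟩, by simp⟩)
    choose k hk using hF
    have key : ∀ n (K : ℕ), ∃ m, ∀ i ≤ K, B n i ⊆ B n m := by
      intro n K
      induction K with
      | zero =>
        exact ⟨0, fun i hi => by rw [Nat.le_zero.mp hi]⟩
      | succ K ih =>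
        obtain ⟨m, hm⟩ := ih
        have h1 : B n m ∈ U n := by rw [hB n]; exact mem_range_self m
        have h2 : B n (K + 1) ∈ U n := by rw [hB n]; exact mem_range_self (K + 1)
        rcases (hchain n).total h1 h2 with hle | hle
        · refine ⟨K + 1, fun i hi => ?_⟩
          by_cases hi' : i ≤ K
          · exact (hm i hi').trans hle
          · have : i = K + 1 := by omega
            rw [this]
        · refine ⟨m, fun i hi => ?_⟩
          by_cases hi' : i ≤ K
          · exact hm i hi'
          · have : i = K + 1 := by omega
            rw [this]; exact hle
    choose m hm using fun n => key n (k n)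
    refine ⟨fun n => B n (m n), fun n => by rw [hB n]; exact mem_range_self _, ?_⟩
    intro x hx
    have := hFcov (mem_range_self (⟨x, hx⟩ : X))
    obtain ⟨_, ⟨n, rfl⟩, hxn⟩ := this
    simp only [hk] at hxn
    have hxB : x ∈ B n (Ψ ⟨x, hx⟩ n) := Nat.find_spec (hex ⟨x, hx⟩ n)
    exact mem_iUnion.mpr ⟨n, hm n _ hxn hxB⟩
  · push_neg at hne
    obtain ⟨n, hn⟩ := hne
    have hX : X = ∅ := by
      have := hcov n
      rw [hn] at this
      simpa using eq_empty_of_subset_empty (by simpa using this)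
    have hE : IsEmpty X := by rw [hX]; exact Set.isEmpty_coe_sort.mpr rfl
    haveI := hE
    have hM := h (fun x => (hE.false x).elim) Subsingleton.measurable
    obtain ⟨F, hF, -⟩ := hM (fun _ => ∅)
      (by intro _ g hg; exact hg.elim)
      (by intro _ a ha; exact ha.elim)
      (by
        rintro _ f ⟨x, rfl⟩
        exact (hE.false x).elim)
    exact (hF 0).elim
end

section
/- If X ⊆ ℝ is an A₃-set, then no Borel image of X into Baire space is a dominating family. -/
/-!
For a Borel map `Ψ : X → ℕ^ℕ`, the traces on `X` of the sets `{x | Ψ x n ≤ k}` can be realised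
by Borel sets ascending in `k`, so for each `n` they form a countable Borel chain covering `X`.
The A₃ property selects one level `κ n` in each chain, so every `Ψ x` lies below `κ` at some
coordinate. Doing this for every tail `n ↦ Ψ x (n + N)` and diagonalising over `N` produces a
function that no `Ψ x` eventually dominates.
-/

open Set Filter

def Dominating (D : Set (ℕ → ℕ)) : Prop :=
  ∀ f : ℕ → ℕ, ∃ g ∈ D, ∀ᶠ n in atTop, f n ≤ g n

lemma exists_monotone_measurableSet_mem_iff_le {α : Type*} [MeasurableSpace α]
    {X : Set α} {φ : X → ℕ} (hφ : Measurable φ) :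
    ∃ C : ℕ → Set α, Monotone C ∧ (∀ k, MeasurableSet (C k)) ∧
      ∀ (x : X) k, (x : α) ∈ C k ↔ φ x ≤ k := by
  have hsublevel : ∀ k, ∃ B : Set α, MeasurableSet B ∧ Subtype.val ⁻¹' B = {x : X | φ x ≤ k} :=
    fun k => MeasurableSpace.measurableSet_comap.mp (hφ (measurableSet_Iic (a := k)))
  choose B hBmeas hBtrace using hsublevel
  refine ⟨accumulate B, monotone_accumulate,
    fun k => MeasurableSet.iUnion fun j => MeasurableSet.iUnion fun _ => hBmeas j, fun x k => ?_⟩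
  have hB : ∀ j, (x : α) ∈ B j ↔ φ x ≤ j := fun j => Set.ext_iff.mp (hBtrace j) x
  simp only [mem_accumulate, hB]
  exact ⟨fun ⟨j, hjk, hxj⟩ => hxj.trans hjk, fun hxk => ⟨k, le_rfl, hxk⟩⟩

lemma A3Set.exists_forall_exists_le {X : Set ℝ} (hX : A3Set X) {φ : ℕ → X → ℕ}
    (hφ : ∀ n, Measurable (φ n)) : ∃ κ : ℕ → ℕ, ∀ x : X, ∃ n, φ n x ≤ κ n := by
  choose C hCmono hCmeas hCsublevel using
    fun n => exists_monotone_measurableSet_mem_iff_le (hφ n)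
  obtain ⟨Y, hYC, hXY⟩ := hX (fun n => range (C n))
    (fun n => countable_range _)
    (fun n => (hCmono n).isChain_range)
    (by rintro n _ ⟨k, rfl⟩; exact hCmeas n k)
    (fun n x hx => ⟨C n (φ n ⟨x, hx⟩), mem_range_self _, (hCsublevel n ⟨x, hx⟩ _).mpr le_rfl⟩)
  choose κ hκ using hYC
  refine ⟨κ, fun x => ?_⟩
  obtain ⟨n, hxn⟩ := mem_iUnion.mp (hXY x.2)
  rw [← hκ n] at hxn
  exact ⟨n, (hCsublevel n x _).mp hxn⟩

lemma not_dominating_of_forall_exists_le_shift {D : Set (ℕ → ℕ)}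
    (hD : ∀ N, ∃ κ : ℕ → ℕ, ∀ g ∈ D, ∃ n, g (n + N) ≤ κ n) : ¬ Dominating D := by
  choose κ hκ using hD
  intro hdom
  -- The diagonal function `f` satisfies `κ N n < f (n + N)` for all `n` and `N`.
  obtain ⟨g, hgD, hfg⟩ := hdom fun m => (Finset.range (m + 1)).sup (fun i => κ i (m - i)) + 1
  obtain ⟨N, hN⟩ := eventually_atTop.mp hfg
  obtain ⟨n, hgn⟩ := hκ N g hgD
  have hN_mem : N ∈ Finset.range (n + N + 1) := Finset.mem_range.mpr (by omega)
  have hκf : κ N n ≤ (Finset.range (n + N + 1)).sup (fun i => κ i (n + N - i)) := by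
    simpa using Finset.le_sup (f := fun i => κ i (n + N - i)) hN_mem
  have hfg' := hN (n + N) (Nat.le_add_left N n)
  omega

theorem stmt13 (X : Set ℝ) (h : A3Set X) :
    ∀ Ψ : X → (ℕ → ℕ), Measurable Ψ → ¬ Dominating (Set.range Ψ) := by
  intro Ψ hΨ
  refine not_dominating_of_forall_exists_le_shift fun N => ?_
  obtain ⟨κ, hκ⟩ := h.exists_forall_exists_le
    (φ := fun n x => Ψ x (n + N)) fun n => (measurable_pi_apply _).comp hΨ
  exact ⟨κ, by rintro _ ⟨x, rfl⟩; exact hκ x⟩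
end

section
/- If X is a subset of a metric space Z, D ⊆ Z is countable, Y is a metric space, and π : X → Y is continuous, then π extends to a function ρ : X ∪ D → Y which is Borel measurable (indeed of class F_σ: preimages of open sets are relatively F_σ in X ∪ D). -/
/-!
Attach to the points of the countable set `D \ X` weights `ε d > 0` that tend to `0` along
the cofinite filter. Send each `d ∈ D \ X` to a point `x ∈ X` with
`dist x d < infDist d X + ε d` and put `ρ d := π x`. Since only finitely many weights exceed
any bound, `ρ` is continuous at every point of `X`. Its discontinuities therefore form a
countable set, so `ρ⁻¹' O` is the union of its interior and a countable set, which is `F_σ`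
in the metric space `X ∪ D`.
-/

open Set Filter Topology Metric

section General

theorem Set.Countable.exists_pos_tendsto_cofinite_zero {α : Type*} {S : Set α}
    (hS : S.Countable) :
    ∃ ε : α → ℝ, (∀ x ∈ S, 0 < ε x) ∧ (∀ x ∉ S, ε x = 0) ∧ Tendsto ε cofinite (𝓝 0) := by
  obtain ⟨ε, hε_pos, c, hε_sum, -⟩ := hS.exists_pos_hasSum_le one_pos
  exact ⟨S.indicator ε, fun x hx => by simpa [hx] using hε_pos x,
    fun x hx => indicator_of_notMem hx ε,
    (summable_subtype_iff_indicator.mp hε_sum.summable).tendsto_cofinite_zero⟩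

variable {α β : Type*} [TopologicalSpace α] [TopologicalSpace β]

theorem continuousAt_of_tendsto_cofinite [T1Space α] {f : α → β} {a : α}
    (h : Tendsto f cofinite (𝓝 (f a))) : ContinuousAt f a :=
  continuousAt_iff_punctured_nhds.mpr (h.mono_left (nhdsNE_le_cofinite a))

theorem isGδ_compl_preimage_of_countable_discontinuities [PerfectlyNormalSpace α] [T1Space α]
    {f : α → β} (hf : {x | ¬ContinuousAt f x}.Countable) {O : Set β} (hO : IsOpen O) :
    IsGδ (f ⁻¹' O)ᶜ := by
  have hsplit : f ⁻¹' O = interior (f ⁻¹' O) ∪ (f ⁻¹' O ∩ {x | ¬ContinuousAt f x}) := by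
    refine Subset.antisymm (fun x hx => ?_) (union_subset interior_subset inter_subset_left)
    by_cases hcont : ContinuousAt f x
    · exact Or.inl (mem_interior_iff_mem_nhds.mpr (hcont.preimage_mem_nhds (hO.mem_nhds hx)))
    · exact Or.inr ⟨hx, hcont⟩
  rw [hsplit, compl_union]
  exact isOpen_interior.isClosed_compl.isGδ.inter (hf.mono inter_subset_right).isGδ_compl

theorem exists_isClosed_eq_iUnion_of_isGδ_compl {s : Set α} (hs : IsGδ sᶜ) :
    ∃ C : ℕ → Set α, (∀ n, IsClosed (C n)) ∧ s = ⋃ n, C n := by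
  obtain ⟨U, hU_open, hU⟩ := isGδ_iff_eq_iInter_nat.mp hs
  exact ⟨fun n => (U n)ᶜ, fun n => (hU_open n).isClosed_compl,
    by rw [← compl_iInter, ← hU, compl_compl]⟩

end General

section Retraction

variable {Z : Type*} [MetricSpace Z]

theorem exists_retraction_union_continuousAt {X D : Set Z} (hX : X.Nonempty)
    (hD : D.Countable) :
    ∃ r : ↥(X ∪ D) → X, (∀ x : X, r (inclusion subset_union_left x) = x) ∧
      ∀ x : X, ContinuousAt r (inclusion subset_union_left x) := by
  obtain ⟨ε, hε_pos, hε_zero, hε_lim⟩ := (hD.mono sdiff_subset).exists_pos_tendsto_cofinite_zero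
  have hnear : ∀ w : ↥(X ∪ D), ∃ x : X,
      ((w : Z) ∈ X → (x : Z) = w) ∧ dist (x : Z) w ≤ infDist (w : Z) X + ε w := by
    intro w
    by_cases hw : (w : Z) ∈ X
    · refine ⟨⟨w, hw⟩, fun _ => rfl, ?_⟩
      rw [dist_self, hε_zero w fun h => h.2 hw, add_zero]
      exact infDist_nonneg
    · have hwD : (w : Z) ∈ D \ X := ⟨w.2.resolve_left hw, hw⟩
      obtain ⟨x, hxX, hx⟩ := (infDist_lt_iff hX).mp (lt_add_of_pos_right _ (hε_pos w hwD))
      exact ⟨⟨x, hxX⟩, fun h => absurd h hw, (dist_comm x w).trans_le hx.le⟩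
  choose r hr_fix hr_dist using hnear
  refine ⟨r, fun x => Subtype.ext (hr_fix _ x.2), fun x => ?_⟩
  rw [ContinuousAt, tendsto_subtype_rng, hr_fix _ x.2, tendsto_iff_dist_tendsto_zero]
  have hw_lim : Tendsto (fun w : ↥(X ∪ D) => (w : Z)) (𝓝 (inclusion subset_union_left x)) (𝓝 x) :=
    continuous_subtype_val.continuousAt
  have hε_cont : ContinuousAt ε x :=
    continuousAt_of_tendsto_cofinite (by rwa [hε_zero x fun h => h.2 x.2])
  have hbound_lim : Tendsto (fun w : ↥(X ∪ D) => 2 * dist (w : Z) x + ε w)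
      (𝓝 (inclusion subset_union_left x)) (𝓝 0) := by
    simpa [hε_zero x fun h => h.2 x.2] using
      ((tendsto_iff_dist_tendsto_zero.mp hw_lim).const_mul 2).add (hε_cont.tendsto.comp hw_lim)
  refine squeeze_zero (fun _ => dist_nonneg) (fun w => ?_) hbound_lim
  calc dist (r w : Z) x ≤ dist (r w : Z) w + dist (w : Z) x := dist_triangle _ _ _
    _ ≤ infDist (w : Z) X + ε w + dist (w : Z) x := by gcongr; exact hr_dist w
    _ ≤ dist (w : Z) x + ε w + dist (w : Z) x := by gcongr; exact infDist_le_dist_of_mem x.2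
    _ = 2 * dist (w : Z) x + ε w := by ring

theorem exists_extend_union_continuousAt {Y : Type*} [TopologicalSpace Y] [Nonempty Y]
    {X D : Set Z} (hD : D.Countable) {π : X → Y} (hπ : Continuous π) :
    ∃ ρ : ↥(X ∪ D) → Y, (∀ x : X, ρ (inclusion subset_union_left x) = π x) ∧
      ∀ x : X, ContinuousAt ρ (inclusion subset_union_left x) := by
  rcases X.eq_empty_or_nonempty with rfl | hX
  · exact ⟨fun _ => Classical.arbitrary Y, fun x => x.2.elim, fun _ => continuousAt_const⟩
  · obtain ⟨r, hr_fix, hr_cont⟩ := exists_retraction_union_continuousAt hX hD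
    exact ⟨π ∘ r, fun x => congrArg π (hr_fix x),
      fun x => hπ.continuousAt.comp (hr_cont x)⟩

end Retraction

theorem stmt18 {Z Y : Type*} [MetricSpace Z] [MetricSpace Y] [Nonempty Y]
    (X D : Set Z) (hD : D.Countable) (π : X → Y) (hπ : Continuous π) :
    ∃ ρ : ↑(X ∪ D) → Y,
      (∀ (x : Z) (hx : x ∈ X), ρ ⟨x, Set.mem_union_left D hx⟩ = π ⟨x, hx⟩) ∧
      (∀ O : Set Y, IsOpen O → ∃ C : ℕ → Set ↑(X ∪ D),
        (∀ n, IsClosed (C n)) ∧ ρ ⁻¹' O = ⋃ n, C n) := by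
  obtain ⟨ρ, hρ_ext, hρ_cont⟩ := exists_extend_union_continuousAt hD hπ
  have hdisc : {w | ¬ContinuousAt ρ w}.Countable :=
    (hD.preimage Subtype.val_injective).mono fun w hw =>
      w.2.resolve_left fun hwX => hw (hρ_cont ⟨w, hwX⟩)
  exact ⟨ρ, fun x hx => hρ_ext ⟨x, hx⟩, fun O hO => exists_isClosed_eq_iUnion_of_isGδ_compl
    (isGδ_compl_preimage_of_countable_discontinuities hdisc hO)⟩
end
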